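/- The forest graph F(G) of a graph G is connected if and only if any two maximal forests of G differ in only finitely many edges (i.e., |E(F1) \ E(F2)| is finite for all maximal forests F1, F2). -/

import Mathlib

open Cardinal

variable {V : Type*}

/-- `F` is a maximal forest of `G`: an acyclic subgraph of `G` maximal among
acyclic subgraphs of `G` under inclusion. -/
def IsMaximalForest (G F : SimpleGraph V) : Prop :=
  F ≤ G ∧ F.IsAcyclic ∧ ∀ F' : SimpleGraph V, F' ≤ G → F'.IsAcyclic → F ≤ F' → F' = F

/-- The forest graph of `G`: vertices are the maximal forests of `G`,
two adjacent iff they differ by exactly one edge. -/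
def forestGraph (G : SimpleGraph V) :
    SimpleGraph {F : SimpleGraph V // IsMaximalForest G F} where
  Adj F₁ F₂ := (F₁.1.edgeSet \ F₂.1.edgeSet).encard = 1 ∧
               (F₂.1.edgeSet \ F₁.1.edgeSet).encard = 1
  symm := ⟨fun F₁ F₂ h => ⟨h.2, h.1⟩⟩
  loopless := ⟨fun F h => by simp at h⟩

/-- The set of cycles of `G`, each cycle identified with its edge set. -/
def cycleSet (G : SimpleGraph V) : Set (Set (Sym2 V)) :=
  {s | ∃ (v : V) (c : G.Walk v v), c.IsCycle ∧ s = {e | e ∈ c.edges}}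

/-!
A step in the forest graph changes a forest by one edge in each direction, so forests in the
same component differ in finitely many edges. Conversely, a maximal forest is exactly an acyclic
subgraph with the same reachability relation as `G`. Given `e = xy ∈ F₁ \ F₂`, deleting `e`
separates `x` from `y` in `F₁`, while `F₂` joins them by a walk; an edge `f` of that walk
crossing from the side of `x` to the other side reconnects the two halves, so `F₁ - e + f` is a
maximal forest adjacent to `F₁` and one edge closer to `F₂`. Induction on the finite set
`F₁ \ F₂` finishes the proof.
-/

open SimpleGraph

namespace SimpleGraph

variable {G H : SimpleGraph V}

theorem reachable_le_of_forall_adj (h : ∀ ⦃u v⦄, G.Adj u v → H.Reachable u v) :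
    G.Reachable ≤ H.Reachable := by
  rintro u v ⟨w⟩
  induction w with
  | nil => rfl
  | cons hadj _ ih => exact (h hadj).trans ih

theorem Reachable.of_sup_edge {x y a b : V} (h : (H ⊔ edge x y).Reachable a b) :
    H.Reachable a b ∨ H.Reachable x b ∨ H.Reachable y b := by
  obtain ⟨w⟩ := h
  induction w with
  | nil => exact .inl .rfl
  | cons hadj _ ih =>
    rw [sup_adj, edge_adj] at hadj
    rcases hadj with hadj | ⟨⟨rfl, rfl⟩ | ⟨rfl, rfl⟩, -⟩
    · exact ih.imp_left hadj.reachable.trans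
    all_goals tauto

end SimpleGraph

namespace IsMaximalForest

variable {G F F₁ F₂ : SimpleGraph V}

theorem iff_maximal :
    IsMaximalForest G F ↔ Maximal (fun H => H ≤ G ∧ H.IsAcyclic) F :=
  ⟨fun ⟨hle, hF, hmax⟩ => ⟨⟨hle, hF⟩, fun _ hH hFH => (hmax _ hH.1 hH.2 hFH).le⟩,
    fun h => ⟨h.prop.1, h.prop.2, fun _ hHG hH hFH =>
      le_antisymm (h.le_of_ge ⟨hHG, hH⟩ hFH) hFH⟩⟩

theorem iff_reachable_eq (hle : F ≤ G) (hF : F.IsAcyclic) :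
    IsMaximalForest G F ↔ F.Reachable = G.Reachable :=
  iff_maximal.trans (maximal_isAcyclic_iff_reachable_eq hle hF)

theorem reachable_eq (h : IsMaximalForest G F) : F.Reachable = G.Reachable :=
  (iff_reachable_eq h.1 h.2.1).1 h

theorem eq_of_edgeSet_subset (h₁ : IsMaximalForest G F₁) (h₂ : IsMaximalForest G F₂)
    (hsub : F₁.edgeSet ⊆ F₂.edgeSet) : F₁ = F₂ :=
  (h₁.2.2 F₂ h₂.1 h₂.2.1 (edgeSet_subset_edgeSet.mp hsub)).symm

theorem deleteEdges_sup_edge {x y a b : V} (h : IsMaximalForest G F) (hab : G.Adj a b)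
    (hxa : (F.deleteEdges {s(x, y)}).Reachable x a)
    (hxb : ¬ (F.deleteEdges {s(x, y)}).Reachable x b) :
    IsMaximalForest G (F.deleteEdges {s(x, y)} ⊔ edge a b) := by
  set H := F.deleteEdges {s(x, y)}
  have hHF : H ≤ F := deleteEdges_le _
  have hle : H ⊔ edge a b ≤ G := sup_le (hHF.trans h.1) ((edge_le_iff _).2 (.inr hab))
  refine (iff_reachable_eq hle
    ((h.2.1.anti hHF).sup_edge_of_not_reachable fun hr => hxb (hxa.trans hr))).2
    (le_antisymm (fun _ _ hr => hr.mono hle) ?_)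
  rw [← h.reachable_eq]
  -- `b` is reachable from `x` in `F = H + xy` but not in `H`, so it lies on the side of `y`.
  have hyb : H.Reachable y b := by
    have hF : F ≤ H ⊔ edge x y := sup_comm H (edge x y) ▸ (deleteEdges_le_iff _ _).1 le_rfl
    have hab' : F.Reachable a b := h.reachable_eq ▸ hab.reachable
    rcases ((hxa.mono hHF).trans hab').mono hF |>.of_sup_edge with hr | hr | hr
    exacts [absurd hr hxb, absurd hr hxb, hr]
  have hxy : (H ⊔ edge a b).Reachable x y :=
    (hxa.mono le_sup_left).trans <| (Adj.reachable ((sup_adj ..).2 (.inr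
      ((edge_adj ..).2 ⟨.inl ⟨rfl, rfl⟩, hab.ne⟩)))).trans (hyb.symm.mono le_sup_left)
  refine reachable_le_of_forall_adj fun u v huv => ?_
  by_cases he : s(u, v) = s(x, y)
  · rcases Sym2.eq_iff.1 he with ⟨rfl, rfl⟩ | ⟨rfl, rfl⟩
    exacts [hxy, hxy.symm]
  · exact ((sup_adj ..).2 (.inl ((deleteEdges_adj ..).2 ⟨huv, he⟩))).reachable

theorem exists_exchange (h₁ : IsMaximalForest G F₁) (h₂ : IsMaximalForest G F₂) {e : Sym2 V}
    (he₁ : e ∈ F₁.edgeSet) (he₂ : e ∉ F₂.edgeSet) :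
    ∃ F, IsMaximalForest G F ∧
      ∃ f ∈ F₂.edgeSet \ F₁.edgeSet, F.edgeSet = insert f (F₁.edgeSet \ {e}) := by
  induction e using Sym2.ind with | _ x y => ?_
  set H := F₁.deleteEdges {s(x, y)}
  have hxy : ¬ H.Reachable x y := isAcyclic_iff_forall_isBridge.mp h₁.2.1 he₁
  obtain ⟨w⟩ : F₂.Reachable x y := h₂.reachable_eq ▸ (h₁.1 he₁).reachable
  obtain ⟨⟨⟨a, b⟩, hab⟩, -, hxa, hxb⟩ := w.exists_boundary_dart {z | H.Reachable x z} .rfl hxy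
  simp only [Set.mem_ofPred_eq] at hxa hxb
  have hab₁ : ¬ F₁.Adj a b := fun hF₁ => hxb <| hxa.trans <| Adj.reachable <|
    (deleteEdges_adj ..).2 ⟨hF₁, fun h => he₂ (Set.mem_singleton_iff.1 h ▸ hab)⟩
  refine ⟨_, h₁.deleteEdges_sup_edge (h₂.1 hab) hxa hxb, s(a, b), ⟨hab, hab₁⟩, ?_⟩
  rw [edgeSet_sup, edgeSet_deleteEdges, edgeSet_edge_of_ne hab.ne, Set.union_singleton]

end IsMaximalForest

theorem exists_isMaximalForest (G : SimpleGraph V) : ∃ F, IsMaximalForest G F :=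
  let ⟨F, hle, hF, hr⟩ := G.exists_isAcyclic_reachable_eq_le
  ⟨F, (IsMaximalForest.iff_reachable_eq hle hF).2 hr⟩

namespace forestGraph

variable {G : SimpleGraph V} {F₁ F₂ : {F : SimpleGraph V // IsMaximalForest G F}}

theorem adj_of_edgeSet_eq {e f : Sym2 V} (he : e ∈ F₁.1.edgeSet) (hf : f ∉ F₁.1.edgeSet)
    (h : F₂.1.edgeSet = insert f (F₁.1.edgeSet \ {e})) : (forestGraph G).Adj F₁ F₂ := by
  have hef : e ≠ f := by rintro rfl; exact hf he
  have h₁₂ : F₁.1.edgeSet \ F₂.1.edgeSet = {e} := by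
    ext; simp only [h]; grind
  have h₂₁ : F₂.1.edgeSet \ F₁.1.edgeSet = {f} := by
    ext; simp only [h]; grind
  simp [forestGraph, h₁₂, h₂₁]

theorem finite_edgeSet_diff_of_reachable (h : (forestGraph G).Reachable F₁ F₂) :
    (F₁.1.edgeSet \ F₂.1.edgeSet).Finite := by
  obtain ⟨w⟩ := h
  induction w with
  | nil => simp
  | cons hadj _ ih =>
    exact ((Set.finite_of_encard_eq_coe hadj.1).union ih).subset (sdiff_triangle _ _ _)

theorem reachable_of_finite_edgeSet_diff (h : (F₁.1.edgeSet \ F₂.1.edgeSet).Finite) :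
    (forestGraph G).Reachable F₁ F₂ := by
  generalize hs : F₁.1.edgeSet \ F₂.1.edgeSet = s at h
  induction s, h using Set.Finite.induction_on generalizing F₁ with
  | empty =>
    rw [Set.sdiff_eq_empty] at hs
    rw [Subtype.ext (F₁.2.eq_of_edgeSet_subset F₂.2 hs)]
  | @insert e s he _ ih =>
    have he' : e ∈ F₁.1.edgeSet \ F₂.1.edgeSet := hs ▸ Set.mem_insert e s
    obtain ⟨F, hF, f, hf, hFe⟩ := F₁.2.exists_exchange F₂.2 he'.1 he'.2
    refine (adj_of_edgeSet_eq (F₂ := ⟨F, hF⟩) he'.1 hf.2 hFe).reachable.trans (ih ?_)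
    simp only [hFe]
    grind

end forestGraph

/-- The forest graph of `G` is connected iff any two maximal forests of `G`
differ in only finitely many edges. -/
theorem forestGraph_connected_iff (G : SimpleGraph V) :
    (forestGraph G).Connected ↔
      ∀ F₁ F₂ : {F : SimpleGraph V // IsMaximalForest G F},
        (F₁.1.edgeSet \ F₂.1.edgeSet).Finite := by
  refine ⟨fun h F₁ F₂ => forestGraph.finite_edgeSet_diff_of_reachable (h.preconnected F₁ F₂),
    fun h => ?_⟩
  obtain ⟨F, hF⟩ := exists_isMaximalForest G
  exact (connected_iff _).2
    ⟨fun F₁ F₂ => forestGraph.reachable_of_finite_edgeSet_diff (h F₁ F₂), ⟨⟨F, hF⟩⟩⟩
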